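/- Define s₀ = 2^{-1/4}, t₀ = 1/2, s_{n+1} = (1−(1−sₙ⁴)^{1/4})/(1+(1−sₙ⁴)^{1/4}), t_{n+1} = (1+s_{n+1})⁴·tₙ − 2^{2n+2}·s_{n+1}(1+s_{n+1}+s_{n+1}²). Then tₙ = r_{2n} where rₙ is the Borwein quadratic sequence, and tₙ → 1/π. -/

import Mathlib

/-!
Along the AGM `a₀ = 1, b₀ = 1/√2` the Landen step gives `d (n+1) = (aₙ - bₙ)/(aₙ + bₙ)`, which
turns the `r`-recurrence into `aₙ² rₙ = 1/2 - ½ ∑_{k<n} 2^k (a_k² - b_k²)`. The AGM gap shrinks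
geometrically, so Gauss's series converges and `aₙ² rₙ → M²/π`, i.e. `rₙ → 1/π`.

For the quartic iteration, `sₙ² = d (2n)` is kept as an invariant: with `σ = s (n+1)`, two Landen
steps give `d (2n+1) = 2σ/(1+σ²)` and `d (2n+2) = σ²`, and two steps of the `r`-recurrence with
these values are exactly one step of the `t`-recurrence.
-/

open Filter Topology Set

/-- The descending Landen transformation of an elliptic modulus. -/
noncomputable def landen (x : ℝ) : ℝ := (1 - √(1 - x ^ 2)) / (1 + √(1 - x ^ 2))

lemma landen_eq {x y : ℝ} (hy : 0 ≤ y) (h : 1 - x ^ 2 = y ^ 2) :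
    landen x = (1 - y) / (1 + y) := by
  rw [landen, h, Real.sqrt_sq hy]

lemma add_div_two_sub_sqrt_mul_le {x y : ℝ} (hy : 0 ≤ y) (hyx : y ≤ x) (hx : x ≤ 9 * y) :
    (x + y) / 2 - √(x * y) ≤ (x - y) / 4 := by
  have hu := Real.sq_sqrt (hy.trans hyx)
  have hv := Real.sq_sqrt hy
  have hvu : √y ≤ √x := Real.sqrt_le_sqrt hyx
  have hu3 : √x ≤ 3 * √y := by nlinarith [Real.sqrt_nonneg x, Real.sqrt_nonneg y]
  -- with `u = √x`, `v = √y` the difference of the two sides is `(u - v) (u - 3v) / 4`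
  rw [Real.sqrt_mul (hy.trans hyx)]
  nlinarith [mul_nonneg (sub_nonneg.2 hvu) (sub_nonneg.2 hu3)]

lemma landen_eq_sub_div_add {x y δ : ℝ} (hx : 0 < x) (hy : 0 ≤ y)
    (h : 1 - δ ^ 2 = (y / x) ^ 2) :
    landen δ = (x - y) / (x + y) := by
  rw [landen_eq (div_nonneg hy hx.le) h]
  field_simp

lemma one_sub_sub_div_add_sq {x y : ℝ} (hx : 0 < x) (hy : 0 ≤ y) :
    1 - ((x - y) / (x + y)) ^ 2 = (√(x * y) / ((x + y) / 2)) ^ 2 := by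
  have hxy : 0 < x + y := by linarith
  rw [div_pow, div_pow, Real.sq_sqrt (by positivity)]
  field_simp
  ring

section AGM

variable {a b : ℕ → ℝ}

lemma agm_bounds (ha : ∀ n, a (n + 1) = (a n + b n) / 2) (hb : ∀ n, b (n + 1) = √(a n * b n))
    (hb0 : 0 ≤ b 0) (hba0 : b 0 ≤ a 0) (n : ℕ) : b 0 ≤ b n ∧ b n ≤ a n ∧ a n ≤ a 0 := by
  induction n with
  | zero => exact ⟨le_rfl, hba0, le_rfl⟩
  | succ n ih =>
    obtain ⟨h0, hba, ha0⟩ := ih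
    have hgm : b n ≤ √(a n * b n) := Real.le_sqrt_of_sq_le (by nlinarith)
    have ham : √(a n * b n) ≤ (a n + b n) / 2 :=
      Real.sqrt_le_iff.2 ⟨by linarith, by nlinarith [sq_nonneg (a n - b n)]⟩
    rw [ha, hb]
    exact ⟨h0.trans hgm, ham, by linarith⟩

lemma agm_sub_le (ha : ∀ n, a (n + 1) = (a n + b n) / 2) (hb : ∀ n, b (n + 1) = √(a n * b n))
    (hb0 : 0 ≤ b 0) (hba0 : b 0 ≤ a 0) (h9 : a 0 ≤ 9 * b 0) (n : ℕ) :
    a n - b n ≤ (a 0 - b 0) / 4 ^ n := by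
  induction n with
  | zero => simp
  | succ n ih =>
    obtain ⟨h0, hba, ha0⟩ := agm_bounds ha hb hb0 hba0 n
    rw [ha, hb, pow_succ, ← div_div]
    calc _ ≤ (a n - b n) / 4 := add_div_two_sub_sqrt_mul_le (hb0.trans h0) hba (by linarith)
      _ ≤ _ := div_le_div_of_nonneg_right ih (by norm_num)

lemma agm_summable (ha : ∀ n, a (n + 1) = (a n + b n) / 2) (hb : ∀ n, b (n + 1) = √(a n * b n))
    (hb0 : 0 ≤ b 0) (hba0 : b 0 ≤ a 0) (h9 : a 0 ≤ 9 * b 0) :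
    Summable fun k ↦ (2 : ℝ) ^ k * (a k ^ 2 - b k ^ 2) := by
  refine .of_nonneg_of_le (fun k ↦ ?_) (fun k ↦ ?_)
    (summable_geometric_two.mul_left (2 * a 0 * (a 0 - b 0)))
  all_goals obtain ⟨h0, hba, ha0⟩ := agm_bounds ha hb hb0 hba0 k
  · have : b k ^ 2 ≤ a k ^ 2 := pow_le_pow_left₀ (hb0.trans h0) hba 2
    exact mul_nonneg (by positivity) (by linarith)
  · have hgap := agm_sub_le ha hb hb0 hba0 h9 k
    have h4 : (4 : ℝ) ^ k = 2 ^ k * 2 ^ k := by rw [← mul_pow]; norm_num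
    calc (2 : ℝ) ^ k * (a k ^ 2 - b k ^ 2) = 2 ^ k * ((a k + b k) * (a k - b k)) := by ring
      _ ≤ 2 ^ k * ((2 * a 0) * ((a 0 - b 0) / 4 ^ k)) := by
        gcongr
        · nlinarith
        · linarith
      _ = 2 * a 0 * (a 0 - b 0) * (1 / 2) ^ k := by
        rw [h4, one_div_pow]
        field_simp

lemma agm_landen {d : ℕ → ℝ} (ha : ∀ n, a (n + 1) = (a n + b n) / 2)
    (hb : ∀ n, b (n + 1) = √(a n * b n)) (hd : ∀ n, d (n + 1) = landen (d n))
    (ha_pos : ∀ n, 0 < a n) (hb_nonneg : ∀ n, 0 ≤ b n) (hd0 : 1 - d 0 ^ 2 = (b 0 / a 0) ^ 2)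
    (n : ℕ) : d (n + 1) = (a n - b n) / (a n + b n) := by
  have hinv : ∀ n, 1 - d n ^ 2 = (b n / a n) ^ 2 := by
    intro n
    induction n with
    | zero => exact hd0
    | succ n ih =>
      rw [hd, landen_eq_sub_div_add (ha_pos n) (hb_nonneg n) ih, ha, hb,
        one_sub_sub_div_add_sq (ha_pos n) (hb_nonneg n)]
  rw [hd, landen_eq_sub_div_add (ha_pos n) (hb_nonneg n) (hinv n)]

lemma agm_sq_mul_eq {d r : ℕ → ℝ} (ha : ∀ n, a (n + 1) = (a n + b n) / 2)
    (hd : ∀ n, d (n + 1) = (a n - b n) / (a n + b n))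
    (hr : ∀ n, r (n + 1) = (1 + d (n + 1)) ^ 2 * r n - 2 ^ (n + 1) * d (n + 1))
    (hab : ∀ n, 0 < a n + b n) (n : ℕ) :
    a n ^ 2 * r n =
      a 0 ^ 2 * r 0 - (∑ k ∈ Finset.range n, (2 : ℝ) ^ k * (a k ^ 2 - b k ^ 2)) / 2 := by
  induction n with
  | zero => simp
  | succ n ih =>
    have hstep : ((a n + b n) / 2) ^ 2 * ((1 + (a n - b n) / (a n + b n)) ^ 2 * r n -
        2 ^ (n + 1) * ((a n - b n) / (a n + b n))) =
        a n ^ 2 * r n - 2 ^ n * (a n ^ 2 - b n ^ 2) / 2 := by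
      field_simp [(hab n).ne']
      ring
    rw [Finset.sum_range_succ, hr, hd, ha, hstep, ih]
    ring

end AGM

theorem borwein_quadratic_tendsto {a b d r : ℕ → ℝ} {M : ℝ}
    (ha0 : a 0 = 1) (hb0 : b 0 = 1 / √2)
    (ha : ∀ n, a (n + 1) = (a n + b n) / 2) (hb : ∀ n, b (n + 1) = √(a n * b n))
    (hMa : Tendsto a atTop (𝓝 M))
    (hGauss : ∑' k : ℕ, (2 : ℝ) ^ k * (a k ^ 2 - b k ^ 2) = 1 - 2 * M ^ 2 / Real.pi)
    (hd0 : d 0 = 1 / √2) (hr0 : r 0 = 1 / 2) (hd : ∀ n, d (n + 1) = landen (d n))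
    (hr : ∀ n, r (n + 1) = (1 + d (n + 1)) ^ 2 * r n - 2 ^ (n + 1) * d (n + 1)) :
    Tendsto r atTop (𝓝 (1 / Real.pi)) := by
  have hsqrt2 : (√2)⁻¹ < 1 := inv_lt_one_of_one_lt₀ Real.one_lt_sqrt_two
  have hb0_pos : 0 < b 0 := by rw [hb0]; positivity
  have hba0 : b 0 ≤ a 0 := by rw [ha0, hb0, one_div]; exact hsqrt2.le
  have h9 : a 0 ≤ 9 * b 0 := by
    rw [ha0, hb0, one_div, ← div_eq_mul_inv, one_le_div (by positivity)]
    nlinarith [Real.sq_sqrt (zero_le_two : (0 : ℝ) ≤ 2), Real.sqrt_nonneg 2]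
  have hbounds := agm_bounds ha hb hb0_pos.le hba0
  have ha_pos n : 0 < a n := hb0_pos.trans_le ((hbounds n).1.trans (hbounds n).2.1)
  have hb_pos n : 0 < b n := hb0_pos.trans_le (hbounds n).1
  have hM : M ≠ 0 :=
    (hb0_pos.trans_le (ge_of_tendsto' hMa fun n ↦ (hbounds n).1.trans (hbounds n).2.1)).ne'
  have hsum : Tendsto (fun n ↦ ∑ k ∈ Finset.range n, (2 : ℝ) ^ k * (a k ^ 2 - b k ^ 2)) atTop
      (𝓝 (1 - 2 * M ^ 2 / Real.pi)) :=
    hGauss ▸ (agm_summable ha hb hb0_pos.le hba0 h9).hasSum.tendsto_sum_nat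
  have hd0' : 1 - d 0 ^ 2 = (b 0 / a 0) ^ 2 := by
    rw [hd0, hb0, ha0, div_one, div_pow, Real.sq_sqrt zero_le_two]
    norm_num
  have hkey := agm_sq_mul_eq ha (agm_landen ha hb hd ha_pos (fun n ↦ (hb_pos n).le) hd0') hr
    (fun n ↦ add_pos (ha_pos n) (hb_pos n))
  have hlim := (tendsto_const_nhds (x := a 0 ^ 2 * r 0)).sub (hsum.div_const 2) |>.div
    (hMa.pow 2) (pow_ne_zero 2 hM)
  convert hlim.congr fun n ↦ ?_ using 2
  · rw [ha0, hr0]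
    field_simp
    ring
  · rw [Pi.div_apply, ← hkey n]
    field_simp [(ha_pos n).ne']

noncomputable def quarticLanden (x : ℝ) : ℝ :=
  (1 - (1 - x ^ 4) ^ ((1 : ℝ) / 4)) / (1 + (1 - x ^ 4) ^ ((1 : ℝ) / 4))

lemma landen_two_mul_div {σ : ℝ} (hσ : σ ^ 2 ≤ 1) : landen (2 * σ / (1 + σ ^ 2)) = σ ^ 2 := by
  have hpos : 0 < 1 + σ ^ 2 := by positivity
  rw [landen_eq (y := (1 - σ ^ 2) / (1 + σ ^ 2)) (div_nonneg (by linarith) hpos.le)] <;>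
    field_simp <;> ring

lemma quarticLanden_eq {x : ℝ} (hx : x ^ 4 ≤ 1) :
    ∃ e ∈ Icc (0 : ℝ) 1, e ^ 4 = 1 - x ^ 4 ∧ quarticLanden x = (1 - e) / (1 + e) := by
  have hx' : 0 ≤ 1 - x ^ 4 := by linarith
  have hx1 : 1 - x ^ 4 ≤ 1 := by nlinarith [pow_two_nonneg (x ^ 2)]
  refine ⟨_, ⟨Real.rpow_nonneg hx' _, Real.rpow_le_one hx' hx1 (by norm_num)⟩, ?_, rfl⟩
  rw [one_div]
  exact_mod_cast Real.rpow_inv_natCast_pow hx' (by norm_num : (4 : ℕ) ≠ 0)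

lemma quarticLanden_mem_Icc {x : ℝ} (hx : x ^ 4 ≤ 1) : quarticLanden x ∈ Icc (0 : ℝ) 1 := by
  obtain ⟨e, ⟨he0, he1⟩, -, hq⟩ := quarticLanden_eq hx
  rw [hq]
  exact ⟨div_nonneg (by linarith) (by linarith), (div_le_one (by linarith)).2 (by linarith)⟩

lemma landen_sq {x : ℝ} (hx : x ^ 4 ≤ 1) :
    landen (x ^ 2) = 2 * quarticLanden x / (1 + quarticLanden x ^ 2) := by
  obtain ⟨e, ⟨he0, -⟩, he4, hq⟩ := quarticLanden_eq hx
  have hpos : 0 < 1 + e := by linarith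
  rw [landen_eq (y := e ^ 2) (sq_nonneg e) (by rw [← pow_mul, ← pow_mul, he4]), hq]
  field_simp
  ring

lemma landen_landen_sq {x : ℝ} (hx : x ^ 4 ≤ 1) :
    landen (landen (x ^ 2)) = quarticLanden x ^ 2 := by
  have hq := quarticLanden_mem_Icc hx
  rw [landen_sq hx, landen_two_mul_div (pow_le_one₀ hq.1 hq.2)]

lemma quadratic_recurrence_add_two {d r : ℕ → ℝ}
    (hr : ∀ n, r (n + 1) = (1 + d (n + 1)) ^ 2 * r n - 2 ^ (n + 1) * d (n + 1))
    {m : ℕ} {σ : ℝ} (h₁ : d (m + 1) = 2 * σ / (1 + σ ^ 2)) (h₂ : d (m + 1 + 1) = σ ^ 2) :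
    r (m + 1 + 1) = (1 + σ) ^ 4 * r m - 2 ^ (m + 2) * σ * (1 + σ + σ ^ 2) := by
  have hpos : 0 < 1 + σ ^ 2 := by positivity
  rw [hr (m + 1), h₂, hr m, h₁]
  field_simp
  ring

theorem quartic_eq_quadratic {d r s t : ℕ → ℝ}
    (hd : ∀ n, d (n + 1) = landen (d n))
    (hr : ∀ n, r (n + 1) = (1 + d (n + 1)) ^ 2 * r n - 2 ^ (n + 1) * d (n + 1))
    (hs0 : s 0 ∈ Icc (0 : ℝ) 1) (hds0 : d 0 = s 0 ^ 2) (htr0 : t 0 = r 0)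
    (hs : ∀ n, s (n + 1) = quarticLanden (s n))
    (ht : ∀ n, t (n + 1) = (1 + s (n + 1)) ^ 4 * t n -
      2 ^ (2 * n + 2) * s (n + 1) * (1 + s (n + 1) + s (n + 1) ^ 2)) (n : ℕ) :
    t n = r (2 * n) := by
  have hs4 : ∀ n, s n ∈ Icc (0 : ℝ) 1 → s n ^ 4 ≤ 1 := fun n h ↦ pow_le_one₀ h.1 h.2
  have hsd : ∀ n, s n ∈ Icc (0 : ℝ) 1 ∧ d (2 * n) = s n ^ 2 := by
    intro n
    induction n with
    | zero => exact ⟨hs0, hds0⟩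
    | succ n ih =>
      rw [hs, show 2 * (n + 1) = 2 * n + 1 + 1 by ring, hd, hd, ih.2]
      exact ⟨quarticLanden_mem_Icc (hs4 n ih.1), landen_landen_sq (hs4 n ih.1)⟩
  induction n with
  | zero => exact htr0
  | succ n ih =>
    obtain ⟨hsn, hdsn⟩ := hsd n
    rw [ht, ih, show 2 * (n + 1) = 2 * n + 1 + 1 by ring]
    refine (quadratic_recurrence_add_two hr (σ := s (n + 1)) ?_ ?_).symm
    · rw [hd, hdsn, landen_sq (hs4 n hsn), hs]
    · rw [hd, hd, hdsn, landen_landen_sq (hs4 n hsn), hs]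

lemma two_rpow_neg_quarter_sq : ((2 : ℝ) ^ (-(1 : ℝ) / 4)) ^ 2 = 1 / √2 := by
  rw [← Real.rpow_natCast, ← Real.rpow_mul zero_le_two, Real.sqrt_eq_rpow, one_div,
    ← Real.rpow_neg zero_le_two]
  norm_num

theorem borwein_quartic_general (a b : ℕ → ℝ) (M : ℝ)
    (ha0 : a 0 = 1) (hb0 : b 0 = 1 / Real.sqrt 2)
    (ha : ∀ n, a (n + 1) = (a n + b n) / 2)
    (hb : ∀ n, b (n + 1) = Real.sqrt (a n * b n))
    (hMa : Filter.Tendsto a Filter.atTop (nhds M))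
    (hGauss : ∑' k : ℕ, (2 : ℝ) ^ k * (a k ^ 2 - b k ^ 2) = 1 - 2 * M ^ 2 / Real.pi)
    (d r : ℕ → ℝ)
    (hd0 : d 0 = 1 / Real.sqrt 2) (hr0 : r 0 = 1 / 2)
    (hd : ∀ n, d (n + 1) =
      (1 - Real.sqrt (1 - d n ^ 2)) / (1 + Real.sqrt (1 - d n ^ 2)))
    (hr : ∀ n, r (n + 1) = (1 + d (n + 1)) ^ 2 * r n - 2 ^ (n + 1) * d (n + 1))
    (s t : ℕ → ℝ)
    (hs0 : s 0 = (2 : ℝ) ^ (-(1 : ℝ) / 4)) (ht0 : t 0 = 1 / 2)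
    (hs : ∀ n, s (n + 1) =
      (1 - (1 - s n ^ 4) ^ ((1 : ℝ) / 4)) / (1 + (1 - s n ^ 4) ^ ((1 : ℝ) / 4)))
    (ht : ∀ n, t (n + 1) = (1 + s (n + 1)) ^ 4 * t n -
      2 ^ (2 * n + 2) * s (n + 1) * (1 + s (n + 1) + s (n + 1) ^ 2)) :
    (∀ n, t n = r (2 * n)) ∧ Filter.Tendsto t Filter.atTop (nhds (1 / Real.pi)) := by
  have hs0_mem : s 0 ∈ Icc (0 : ℝ) 1 := by
    rw [hs0]
    exact ⟨by positivity, Real.rpow_le_one_of_one_le_of_nonpos one_le_two (by norm_num)⟩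
  have htr : ∀ n, t n = r (2 * n) := quartic_eq_quadratic hd hr hs0_mem
    (by rw [hd0, hs0, two_rpow_neg_quarter_sq]) (ht0.trans hr0.symm) hs ht
  have hr_lim := borwein_quadratic_tendsto ha0 hb0 ha hb hMa hGauss hd0 hr0 hd hr
  refine ⟨htr, (hr_lim.comp ?_).congr fun n ↦ (htr n).symm⟩
  exact tendsto_id.const_mul_atTop' two_pos

theorem borwein_quartic (a b : ℕ → ℝ) (M : ℝ)
    (ha0 : a 0 = 1) (hb0 : b 0 = 1 / Real.sqrt 2)
    (ha : ∀ n, a (n + 1) = (a n + b n) / 2)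
    (hb : ∀ n, b (n + 1) = Real.sqrt (a n * b n))
    (hMa : Filter.Tendsto a Filter.atTop (nhds M))
    (hMb : Filter.Tendsto b Filter.atTop (nhds M))
    (hGauss : ∑' k : ℕ, (2 : ℝ) ^ k * (a k ^ 2 - b k ^ 2) = 1 - 2 * M ^ 2 / Real.pi)
    (d r : ℕ → ℝ)
    (hd0 : d 0 = 1 / Real.sqrt 2) (hr0 : r 0 = 1 / 2)
    (hd : ∀ n, d (n + 1) =
      (1 - Real.sqrt (1 - d n ^ 2)) / (1 + Real.sqrt (1 - d n ^ 2)))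
    (hr : ∀ n, r (n + 1) = (1 + d (n + 1)) ^ 2 * r n - 2 ^ (n + 1) * d (n + 1))
    (s t : ℕ → ℝ)
    (hs0 : s 0 = (2 : ℝ) ^ (-(1 : ℝ) / 4)) (ht0 : t 0 = 1 / 2)
    (hs : ∀ n, s (n + 1) =
      (1 - (1 - s n ^ 4) ^ ((1 : ℝ) / 4)) / (1 + (1 - s n ^ 4) ^ ((1 : ℝ) / 4)))
    (ht : ∀ n, t (n + 1) = (1 + s (n + 1)) ^ 4 * t n -
      2 ^ (2 * n + 2) * s (n + 1) * (1 + s (n + 1) + s (n + 1) ^ 2)) :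
    (∀ n, t n = r (2 * n)) ∧ Filter.Tendsto t Filter.atTop (nhds (1 / Real.pi)) :=
  borwein_quartic_general a b M ha0 hb0 ha hb hMa hGauss d r hd0 hr0 hd hr s t hs0 ht0 hs ht
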